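/- For the single-period robust newsvendor network, the worst-case profit is nondecreasing in the mean demand: if the mean vector increases from μ to μ + Δμ with Δμ ≥ 0 (translating the uncertainty set by Δμ), then the optimal worst-case profit does not decrease, provided the deterministic problem with demand Δμ yields nonnegative profit. -/

import Mathlib

open Matrix

/-- Inner worst-case-recourse value: `max { vᵀx − c_Pᵀd : x ≥ 0, R_S x ≤ s, R_D x ≤ d }`. -/
noncomputable def recourseVal {m n p : ℕ} (cP : Fin n → ℝ) (v : Fin p → ℝ)
    (RS : Matrix (Fin m) (Fin p) ℝ) (RD : Matrix (Fin n) (Fin p) ℝ)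
    (s : Fin m → ℝ) (d : Fin n → ℝ) : ℝ :=
  sSup ((fun x => v ⬝ᵥ x - cP ⬝ᵥ d) ''
    {x : Fin p → ℝ | (∀ j, 0 ≤ x j) ∧ RS.mulVec x ≤ s ∧ RD.mulVec x ≤ d})

/-- Optimal worst-case profit of the single-period robust newsvendor network
with uncertainty set `U`:
`max_{s ≥ 0} [ −(c_S + c_H)ᵀ s + min_{d ∈ U} max_{x feasible} (vᵀx − c_Pᵀd) ]`. -/
noncomputable def newsvendorVal {m n p : ℕ} (cS cH : Fin m → ℝ) (cP : Fin n → ℝ)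
    (v : Fin p → ℝ) (RS : Matrix (Fin m) (Fin p) ℝ) (RD : Matrix (Fin n) (Fin p) ℝ)
    (U : Set (Fin n → ℝ)) : ℝ :=
  sSup ((fun s => -((cS + cH) ⬝ᵥ s) + sInf ((recourseVal cP v RS RD s) '' U)) ''
    {s : Fin m → ℝ | ∀ i, 0 ≤ s i})

/-!
Superadditivity of the recourse problem: a plan that is feasible for supply `s₁` and demand `d`,
added to a plan feasible for `s₂` and `Δμ`, is feasible for `s₁ + s₂` and `d + Δμ`. Adding a
near-optimal deterministic solution for demand `Δμ`, whose profit is at least `-ε`, to any first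
stage decision therefore loses at most `ε` against the shifted uncertainty set.

The values are suprema and infima of real sets, which are `0` when the set is unbounded. If some
product of positive value consumes neither supply nor demand, every recourse value is this junk
`0` and both sides agree. Otherwise every recourse problem is bounded, and products consuming no
demand are the only ones whose output is not bounded by the demand; so shifting the uncertainty
set changes the worst-case profit by at most a constant, and both sides are unbounded together.
-/

theorem sSup_image_le_sSup_image_of_forall_le_add {α : Type*} {S : Set α} {f g : α → ℝ}
    (hS : S.Nonempty) (hfg : ∀ a ∈ S, ∀ ε > 0, ∃ b ∈ S, f a ≤ g b + ε)
    (hgf : ∃ C, ∀ b ∈ S, g b ≤ f b + C) : sSup (f '' S) ≤ sSup (g '' S) := by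
  by_cases hg : BddAbove (g '' S)
  · refine csSup_le (hS.image f) ?_
    rintro _ ⟨a, ha, rfl⟩
    refine le_of_forall_pos_le_add fun ε hε => ?_
    obtain ⟨b, hb, hab⟩ := hfg a ha ε hε
    exact hab.trans (add_le_add_left (le_csSup hg ⟨b, hb, rfl⟩) ε)
  · have hf : ¬BddAbove (f '' S) := by
      rintro ⟨M, hM⟩
      obtain ⟨C, hC⟩ := hgf
      refine hg ⟨M + C, ?_⟩
      rintro _ ⟨b, hb, rfl⟩
      linarith [hC b hb, hM ⟨b, hb, rfl⟩]
    rw [Real.sSup_of_not_bddAbove hf, Real.sSup_of_not_bddAbove hg]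

theorem le_div_of_mulVec_le {ι κ : Type*} [Fintype κ] {A : Matrix ι κ ℝ} {x : κ → ℝ}
    {b : ι → ℝ} {i : ι} {j : κ} (hA : ∀ j, 0 ≤ A i j) (hx : 0 ≤ x) (h : A *ᵥ x ≤ b)
    (hij : 0 < A i j) : x j ≤ b i / A i j := by
  rw [le_div_iff₀ hij, mul_comm]
  exact (Finset.single_le_sum (f := fun j => A i j * x j) (fun j _ => mul_nonneg (hA j) (hx j))
    (Finset.mem_univ j)).trans (h i)

section RobustNewsvendor

variable {m n p : ℕ} {cS cH : Fin m → ℝ} {cP : Fin n → ℝ} {v : Fin p → ℝ}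
  {RS : Matrix (Fin m) (Fin p) ℝ} {RD : Matrix (Fin n) (Fin p) ℝ}
  {s s₁ s₂ : Fin m → ℝ} {d e : Fin n → ℝ} {x : Fin p → ℝ}

def feasibleSet (RS : Matrix (Fin m) (Fin p) ℝ) (RD : Matrix (Fin n) (Fin p) ℝ)
    (s : Fin m → ℝ) (d : Fin n → ℝ) : Set (Fin p → ℝ) :=
  {x | (∀ j, 0 ≤ x j) ∧ RS *ᵥ x ≤ s ∧ RD *ᵥ x ≤ d}

def RecourseBounded (cP : Fin n → ℝ) (v : Fin p → ℝ) (RS : Matrix (Fin m) (Fin p) ℝ)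
    (RD : Matrix (Fin n) (Fin p) ℝ) : Prop :=
  ∀ s d, BddAbove ((fun x => v ⬝ᵥ x - cP ⬝ᵥ d) '' feasibleSet RS RD s d)

def demandFreeProducts (RD : Matrix (Fin n) (Fin p) ℝ) : Set (Fin p) :=
  {j | ∀ k, RD k j = 0}

theorem zero_mem_feasibleSet (hs : 0 ≤ s) (hd : 0 ≤ d) : 0 ∈ feasibleSet RS RD s d :=
  ⟨fun _ => le_rfl, by rwa [mulVec_zero], by rwa [mulVec_zero]⟩

theorem feasibleSet_mono {s' : Fin m → ℝ} {d' : Fin n → ℝ} (hs : s ≤ s') (hd : d ≤ d') :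
    feasibleSet RS RD s d ⊆ feasibleSet RS RD s' d' :=
  fun _ ⟨hx, hxs, hxd⟩ => ⟨hx, hxs.trans hs, hxd.trans hd⟩

theorem add_mem_feasibleSet {y : Fin p → ℝ} {d₂ : Fin n → ℝ} (hx : x ∈ feasibleSet RS RD s₁ d)
    (hy : y ∈ feasibleSet RS RD s₂ d₂) : x + y ∈ feasibleSet RS RD (s₁ + s₂) (d + d₂) :=
  ⟨fun j => add_nonneg (hx.1 j) (hy.1 j), by rw [mulVec_add]; exact add_le_add hx.2.1 hy.2.1,
    by rw [mulVec_add]; exact add_le_add hx.2.2 hy.2.2⟩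

theorem indicator_demandFreeProducts_mem_feasibleSet (hRS : ∀ i j, 0 ≤ RS i j)
    (hx : x ∈ feasibleSet RS RD s d) :
    (demandFreeProducts RD).indicator x ∈ feasibleSet RS RD s 0 := by
  refine ⟨Set.indicator_nonneg fun j _ => hx.1 j, fun i => ?_, fun k => ?_⟩
  · have hle : (demandFreeProducts RD).indicator x ≤ x := Set.indicator_le_self' fun j _ => hx.1 j
    exact le_trans (Finset.sum_le_sum (s := Finset.univ) fun j _ =>
      mul_le_mul_of_nonneg_left (hle j) (hRS i j)) (hx.2.1 i)
  · show ∑ j, RD k j * (demandFreeProducts RD).indicator x j ≤ 0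
    refine le_of_eq (Finset.sum_eq_zero fun j _ => ?_)
    by_cases hj : j ∈ demandFreeProducts RD
    · rw [hj k, zero_mul]
    · rw [Set.indicator_of_notMem hj, mul_zero]

theorem exists_dotProduct_le_indicator_demandFreeProducts_add (hRD : ∀ k j, 0 ≤ RD k j)
    (v : Fin p → ℝ) (e : Fin n → ℝ) : ∃ K, ∀ s, ∀ x ∈ feasibleSet RS RD s e,
      v ⬝ᵥ x ≤ v ⬝ᵥ (demandFreeProducts RD).indicator x + K := by
  have hcol : ∀ j, ∃ u, ∀ s, ∀ x ∈ feasibleSet RS RD s e,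
      v j * x j ≤ v j * (demandFreeProducts RD).indicator x j + u := by
    intro j
    by_cases hj : j ∈ demandFreeProducts RD
    · exact ⟨0, fun s x _ => by rw [Set.indicator_of_mem hj, add_zero]⟩
    obtain ⟨k, hk⟩ := not_forall.mp hj
    refine ⟨|v j| * (e k / RD k j), fun s x hx => ?_⟩
    rw [Set.indicator_of_notMem hj, mul_zero, zero_add]
    exact (mul_le_mul_of_nonneg_right (le_abs_self _) (hx.1 j)).trans
      (mul_le_mul_of_nonneg_left
        (le_div_of_mulVec_le (hRD k) hx.1 hx.2.2 ((hRD k j).lt_of_ne' hk)) (abs_nonneg _))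
  choose u hu using hcol
  refine ⟨∑ j, u j, fun s x hx => ?_⟩
  rw [dotProduct, dotProduct, ← Finset.sum_add_distrib]
  exact Finset.sum_le_sum fun j _ => hu j s x hx

theorem recourseBounded_of_forall_exists_ne_zero (hRS : ∀ i j, 0 ≤ RS i j)
    (hRD : ∀ k j, 0 ≤ RD k j) (hfree : ∀ j, 0 < v j → (∀ i, RS i j = 0) → ∃ k, RD k j ≠ 0) :
    RecourseBounded cP v RS RD := by
  intro s d
  have hcol : ∀ j, ∃ u, ∀ x ∈ feasibleSet RS RD s d, v j * x j ≤ u := by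
    intro j
    rcases le_or_gt (v j) 0 with hvj | hvj
    · exact ⟨0, fun x hx => mul_nonpos_of_nonpos_of_nonneg hvj (hx.1 j)⟩
    by_cases hRSj : ∀ i, RS i j = 0
    · obtain ⟨k, hk⟩ := hfree j hvj hRSj
      exact ⟨v j * (d k / RD k j), fun x hx => mul_le_mul_of_nonneg_left
        (le_div_of_mulVec_le (hRD k) hx.1 hx.2.2 ((hRD k j).lt_of_ne' hk)) hvj.le⟩
    · obtain ⟨i, hi⟩ := not_forall.mp hRSj
      exact ⟨v j * (s i / RS i j), fun x hx => mul_le_mul_of_nonneg_left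
        (le_div_of_mulVec_le (hRS i) hx.1 hx.2.1 ((hRS i j).lt_of_ne' hi)) hvj.le⟩
  choose u hu using hcol
  refine ⟨∑ j, u j - cP ⬝ᵥ d, ?_⟩
  rintro _ ⟨x, hx, rfl⟩
  exact sub_le_sub_right (Finset.sum_le_sum fun j _ => hu j x hx) _

theorem recourseVal_eq_zero_of_free {j : Fin p} (hvj : 0 < v j) (hRSj : ∀ i, RS i j = 0)
    (hRDj : ∀ k, RD k j = 0) (hs : 0 ≤ s) (hd : 0 ≤ d) : recourseVal cP v RS RD s d = 0 := by
  refine Real.sSup_of_not_bddAbove fun ⟨M, hM⟩ => ?_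
  set t := (|M| + |cP ⬝ᵥ d| + 1) / v j
  have hmem : Pi.single j t ∈ feasibleSet RS RD s d := by
    have hRS0 : RS *ᵥ Pi.single j t = 0 := by ext i; simp [hRSj]
    have hRD0 : RD *ᵥ Pi.single j t = 0 := by ext k; simp [hRDj]
    have ht : 0 ≤ t := by positivity
    exact ⟨(Pi.single_nonneg.mpr ht : (0 : Fin p → ℝ) ≤ _), hRS0 ▸ hs, hRD0 ▸ hd⟩
  have hval := hM ⟨_, hmem, rfl⟩
  simp only [dotProduct_single, t, mul_div_cancel₀ _ hvj.ne'] at hval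
  linarith [le_abs_self M, le_abs_self (cP ⬝ᵥ d)]

theorem le_recourseVal (hb : RecourseBounded cP v RS RD) (hx : x ∈ feasibleSet RS RD s d) :
    v ⬝ᵥ x - cP ⬝ᵥ d ≤ recourseVal cP v RS RD s d :=
  le_csSup (hb s d) ⟨x, hx, rfl⟩

theorem recourseVal_le {c : ℝ} (hs : 0 ≤ s) (hd : 0 ≤ d)
    (h : ∀ x ∈ feasibleSet RS RD s d, v ⬝ᵥ x - cP ⬝ᵥ d ≤ c) : recourseVal cP v RS RD s d ≤ c :=
  csSup_le ((Set.nonempty_of_mem (zero_mem_feasibleSet hs hd)).image _)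
    (by rintro _ ⟨x, hx, rfl⟩; exact h x hx)

theorem neg_dotProduct_le_recourseVal (hb : RecourseBounded cP v RS RD) (hs : 0 ≤ s)
    (hd : 0 ≤ d) : -(cP ⬝ᵥ d) ≤ recourseVal cP v RS RD s d := by
  simpa using le_recourseVal hb (zero_mem_feasibleSet hs hd)

theorem recourseVal_add_le {d₂ : Fin n → ℝ} {x₂ : Fin p → ℝ} (hb : RecourseBounded cP v RS RD)
    (hs₁ : 0 ≤ s₁) (hd : 0 ≤ d) (hx₂ : x₂ ∈ feasibleSet RS RD s₂ d₂) :
    recourseVal cP v RS RD s₁ d + (v ⬝ᵥ x₂ - cP ⬝ᵥ d₂) ≤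
      recourseVal cP v RS RD (s₁ + s₂) (d + d₂) := by
  rw [← le_sub_iff_add_le]
  refine recourseVal_le hs₁ hd fun x₁ hx₁ => ?_
  have := le_recourseVal hb (add_mem_feasibleSet hx₁ hx₂)
  rw [dotProduct_add, dotProduct_add] at this
  linarith

theorem recourseVal_zero_le (hb : RecourseBounded cP v RS RD) (hs : 0 ≤ s) (hd : 0 ≤ d) :
    recourseVal cP v RS RD s 0 ≤ recourseVal cP v RS RD s d + cP ⬝ᵥ d := by
  refine recourseVal_le hs le_rfl fun x hx => ?_
  have := le_recourseVal hb (feasibleSet_mono le_rfl hd hx)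
  rw [dotProduct_zero]
  linarith

theorem exists_recourseVal_le_recourseVal_zero_add (hRS : ∀ i j, 0 ≤ RS i j)
    (hRD : ∀ k j, 0 ≤ RD k j) (hb : RecourseBounded cP v RS RD) (he : 0 ≤ e) :
    ∃ K, ∀ s, 0 ≤ s → recourseVal cP v RS RD s e ≤ recourseVal cP v RS RD s 0 + K := by
  obtain ⟨K, hK⟩ := exists_dotProduct_le_indicator_demandFreeProducts_add (RS := RS) hRD v e
  refine ⟨K - cP ⬝ᵥ e, fun s hs => recourseVal_le hs he fun x hx => ?_⟩
  have := le_recourseVal hb (indicator_demandFreeProducts_mem_feasibleSet hRS hx)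
  rw [dotProduct_zero] at this
  linarith [hK s x hx]

theorem bddBelow_image_recourseVal {V : Set (Fin n → ℝ)} (hb : RecourseBounded cP v RS RD)
    (hs : 0 ≤ s) (hV : IsCompact V) (hVpos : ∀ d ∈ V, 0 ≤ d) :
    BddBelow (recourseVal cP v RS RD s '' V) := by
  obtain ⟨M, hM⟩ := hV.bddAbove_image (f := (cP ⬝ᵥ ·)) (by fun_prop)
  refine ⟨-M, ?_⟩
  rintro _ ⟨d, hd, rfl⟩
  exact (neg_le_neg (hM ⟨d, hd, rfl⟩)).trans (neg_dotProduct_le_recourseVal hb hs (hVpos d hd))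

noncomputable def worstCaseProfit (cS cH : Fin m → ℝ) (cP : Fin n → ℝ) (v : Fin p → ℝ)
    (RS : Matrix (Fin m) (Fin p) ℝ) (RD : Matrix (Fin n) (Fin p) ℝ) (U : Set (Fin n → ℝ))
    (s : Fin m → ℝ) : ℝ :=
  -((cS + cH) ⬝ᵥ s) + sInf (recourseVal cP v RS RD s '' U)

theorem newsvendorVal_eq_sSup_worstCaseProfit (U : Set (Fin n → ℝ)) :
    newsvendorVal cS cH cP v RS RD U =
      sSup (worstCaseProfit cS cH cP v RS RD U '' {s | ∀ i, 0 ≤ s i}) :=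
  rfl

theorem worstCaseProfit_eq_of_free {j : Fin p} {V : Set (Fin n → ℝ)} (hvj : 0 < v j)
    (hRSj : ∀ i, RS i j = 0) (hRDj : ∀ k, RD k j = 0) (hV : V.Nonempty)
    (hVpos : ∀ d ∈ V, 0 ≤ d) (hs : 0 ≤ s) :
    worstCaseProfit cS cH cP v RS RD V s = -((cS + cH) ⬝ᵥ s) := by
  rw [worstCaseProfit, Set.image_congr (g := fun _ => (0 : ℝ))
    fun d hd => recourseVal_eq_zero_of_free hvj hRSj hRDj hs (hVpos d hd),
    hV.image_const, csInf_singleton, add_zero]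

theorem newsvendorVal_eq_of_free {j : Fin p} {V W : Set (Fin n → ℝ)} (hvj : 0 < v j)
    (hRSj : ∀ i, RS i j = 0) (hRDj : ∀ k, RD k j = 0) (hV : V.Nonempty)
    (hVpos : ∀ d ∈ V, 0 ≤ d) (hW : W.Nonempty) (hWpos : ∀ d ∈ W, 0 ≤ d) :
    newsvendorVal cS cH cP v RS RD V = newsvendorVal cS cH cP v RS RD W := by
  have hVW : ∀ X : Set (Fin n → ℝ), X.Nonempty → (∀ d ∈ X, 0 ≤ d) →
      worstCaseProfit cS cH cP v RS RD X '' {s | ∀ i, 0 ≤ s i} =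
        (fun s => -((cS + cH) ⬝ᵥ s)) '' {s | ∀ i, 0 ≤ s i} := fun X hX hXpos =>
    Set.image_congr fun s hs => worstCaseProfit_eq_of_free hvj hRSj hRDj hX hXpos hs
  rw [newsvendorVal_eq_sSup_worstCaseProfit, newsvendorVal_eq_sSup_worstCaseProfit,
    hVW V hV hVpos, hVW W hW hWpos]

theorem worstCaseProfit_le {V : Set (Fin n → ℝ)} (hb : RecourseBounded cP v RS RD)
    (hs : 0 ≤ s) (hV : IsCompact V) (hVpos : ∀ d ∈ V, 0 ≤ d) (hd : d ∈ V) :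
    worstCaseProfit cS cH cP v RS RD V s ≤ -((cS + cH) ⬝ᵥ s) + recourseVal cP v RS RD s d :=
  add_le_add le_rfl (csInf_le (bddBelow_image_recourseVal hb hs hV hVpos) ⟨d, hd, rfl⟩)

theorem exists_worstCaseProfit_le_add {V W : Set (Fin n → ℝ)} (hRS : ∀ i j, 0 ≤ RS i j)
    (hRD : ∀ k j, 0 ≤ RD k j) (hb : RecourseBounded cP v RS RD) (hV : IsCompact V)
    (hVne : V.Nonempty) (hVpos : ∀ d ∈ V, 0 ≤ d) (hW : IsCompact W) (hWne : W.Nonempty)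
    (hWpos : ∀ d ∈ W, 0 ≤ d) :
    ∃ C, ∀ s, 0 ≤ s →
      worstCaseProfit cS cH cP v RS RD W s ≤ worstCaseProfit cS cH cP v RS RD V s + C := by
  obtain ⟨e, he⟩ := hWne
  obtain ⟨K, hK⟩ := exists_recourseVal_le_recourseVal_zero_add hRS hRD hb (hWpos e he)
  obtain ⟨M, hM⟩ := hV.bddAbove_image (f := (cP ⬝ᵥ ·)) (by fun_prop)
  refine ⟨K + M, fun s hs => ?_⟩
  have hinf : recourseVal cP v RS RD s 0 - M ≤ sInf (recourseVal cP v RS RD s '' V) := by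
    refine le_csInf (hVne.image _) ?_
    rintro _ ⟨d, hd, rfl⟩
    linarith [recourseVal_zero_le hb hs (hVpos d hd), hM ⟨d, hd, rfl⟩]
  have hW := worstCaseProfit_le (cS := cS) (cH := cH) hb hs hW hWpos he
  unfold worstCaseProfit at hW ⊢
  linarith [hK s hs]

theorem worstCaseProfit_add_le {U : Set (Fin n → ℝ)} {Δμ : Fin n → ℝ} {x₂ : Fin p → ℝ}
    (hb : RecourseBounded cP v RS RD) (hU : IsCompact U) (hUne : U.Nonempty)
    (hUpos : ∀ d ∈ U, 0 ≤ d) (hs₁ : 0 ≤ s₁) (hx₂ : x₂ ∈ feasibleSet RS RD s₂ Δμ) :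
    worstCaseProfit cS cH cP v RS RD U s₁ + (-((cS + cH) ⬝ᵥ s₂) + (v ⬝ᵥ x₂ - cP ⬝ᵥ Δμ)) ≤
      worstCaseProfit cS cH cP v RS RD ((fun d => d + Δμ) '' U) (s₁ + s₂) := by
  have hinf : sInf (recourseVal cP v RS RD s₁ '' U) + (v ⬝ᵥ x₂ - cP ⬝ᵥ Δμ) ≤
      sInf (recourseVal cP v RS RD (s₁ + s₂) '' ((fun d => d + Δμ) '' U)) := by
    refine le_csInf ((hUne.image _).image _) ?_
    rintro _ ⟨_, ⟨d, hd, rfl⟩, rfl⟩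
    calc sInf (recourseVal cP v RS RD s₁ '' U) + (v ⬝ᵥ x₂ - cP ⬝ᵥ Δμ)
        ≤ recourseVal cP v RS RD s₁ d + (v ⬝ᵥ x₂ - cP ⬝ᵥ Δμ) :=
          add_le_add (csInf_le (bddBelow_image_recourseVal hb hs₁ hU hUpos) ⟨d, hd, rfl⟩) le_rfl
      _ ≤ recourseVal cP v RS RD (s₁ + s₂) (d + Δμ) := recourseVal_add_le hb hs₁ (hUpos d hd) hx₂
  rw [worstCaseProfit, worstCaseProfit, dotProduct_add]
  linarith

theorem exists_feasible_profit_gt_of_newsvendorVal_singleton_nonneg {Δμ : Fin n → ℝ} {ε : ℝ}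
    (hΔ : 0 ≤ Δμ) (hdet : 0 ≤ newsvendorVal cS cH cP v RS RD {Δμ}) (hε : 0 < ε) :
    ∃ s, 0 ≤ s ∧ ∃ x ∈ feasibleSet RS RD s Δμ,
      -ε < -((cS + cH) ⬝ᵥ s) + (v ⬝ᵥ x - cP ⬝ᵥ Δμ) := by
  have hS : {s : Fin m → ℝ | ∀ i, 0 ≤ s i}.Nonempty := ⟨0, fun _ => le_rfl⟩
  obtain ⟨_, ⟨s, hs, rfl⟩, hs_gt⟩ := exists_lt_of_lt_csSup (hS.image _)
    (show -(ε / 2) < newsvendorVal cS cH cP v RS RD {Δμ} by linarith)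
  simp only [Set.image_singleton, csInf_singleton] at hs_gt
  obtain ⟨_, ⟨x, hx, rfl⟩, hx_gt⟩ :=
    exists_lt_of_lt_csSup ((Set.nonempty_of_mem (zero_mem_feasibleSet hs hΔ)).image _)
      (sub_lt_self (recourseVal cP v RS RD s Δμ) (half_pos hε))
  exact ⟨s, hs, x, hx, by linarith⟩

end RobustNewsvendor

theorem stmt_2_general (m n p : ℕ) (cS cH : Fin m → ℝ) (cP : Fin n → ℝ) (v : Fin p → ℝ)
    (RS : Matrix (Fin m) (Fin p) ℝ) (RD : Matrix (Fin n) (Fin p) ℝ)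
    (hRS : ∀ i j, 0 ≤ RS i j) (hRD : ∀ k j, 0 ≤ RD k j)
    (U : Set (Fin n → ℝ)) (hUc : IsCompact U) (hUne : U.Nonempty)
    (hUpos : ∀ d ∈ U, ∀ k, 0 ≤ d k)
    (Δμ : Fin n → ℝ) (hΔ : ∀ k, 0 ≤ Δμ k)
    (hdet : 0 ≤ newsvendorVal cS cH cP v RS RD ({Δμ} : Set (Fin n → ℝ))) :
    newsvendorVal cS cH cP v RS RD U ≤
      newsvendorVal cS cH cP v RS RD ((fun d => d + Δμ) '' U) := by
  have hWc : IsCompact ((fun d => d + Δμ) '' U) := hUc.image (continuous_add_const Δμ)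
  have hWpos : ∀ d ∈ (fun d => d + Δμ) '' U, 0 ≤ d := by
    rintro _ ⟨d, hd, rfl⟩
    exact add_nonneg (hUpos d hd) hΔ
  by_cases hfree : ∃ j, 0 < v j ∧ (∀ i, RS i j = 0) ∧ ∀ k, RD k j = 0
  · obtain ⟨j, hvj, hRSj, hRDj⟩ := hfree
    exact (newsvendorVal_eq_of_free hvj hRSj hRDj hUne hUpos (hUne.image _) hWpos).le
  push Not at hfree
  have hb := recourseBounded_of_forall_exists_ne_zero (cP := cP) hRS hRD hfree
  rw [newsvendorVal_eq_sSup_worstCaseProfit, newsvendorVal_eq_sSup_worstCaseProfit]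
  refine sSup_image_le_sSup_image_of_forall_le_add ⟨0, fun _ => le_rfl⟩ (fun s₁ hs₁ ε hε => ?_)
    (exists_worstCaseProfit_le_add hRS hRD hb hUc hUne hUpos hWc (hUne.image _) hWpos)
  obtain ⟨s₂, hs₂, x₂, hx₂, hgood⟩ :=
    exists_feasible_profit_gt_of_newsvendorVal_singleton_nonneg hΔ hdet hε
  refine ⟨s₁ + s₂, add_nonneg hs₁ hs₂, ?_⟩
  linarith [worstCaseProfit_add_le (cS := cS) (cH := cH) hb hUc hUne hUpos hs₁ hx₂]

/-- the worst-case profit of the single-period robust newsvendor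
network is nondecreasing in the mean demand: if the uncertainty set is shifted
by `Δμ ≥ 0` and the deterministic problem with demand `Δμ` has nonnegative
optimal profit, then the optimal worst-case profit does not decrease. -/
theorem stmt_2 (m n p : ℕ) (cS cH : Fin m → ℝ) (cP : Fin n → ℝ) (v : Fin p → ℝ)
    (RS : Matrix (Fin m) (Fin p) ℝ) (RD : Matrix (Fin n) (Fin p) ℝ)
    (hcS : ∀ i, 0 ≤ cS i) (hcH : ∀ i, 0 ≤ cH i) (hcP : ∀ k, 0 ≤ cP k)
    (hv : ∀ j, 0 ≤ v j) (hRS : ∀ i j, 0 ≤ RS i j) (hRD : ∀ k j, 0 ≤ RD k j)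
    (U : Set (Fin n → ℝ)) (hUc : IsCompact U) (hUne : U.Nonempty)
    (hUpos : ∀ d ∈ U, ∀ k, 0 ≤ d k)
    (Δμ : Fin n → ℝ) (hΔ : ∀ k, 0 ≤ Δμ k)
    (hdet : 0 ≤ newsvendorVal cS cH cP v RS RD ({Δμ} : Set (Fin n → ℝ))) :
    newsvendorVal cS cH cP v RS RD U ≤
      newsvendorVal cS cH cP v RS RD ((fun d => d + Δμ) '' U) :=
  stmt_2_general m n p cS cH cP v RS RD hRS hRD U hUc hUne hUpos Δμ hΔ hdet
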